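/- Characterization of L-containment (freeze theorem): G1 is L-contained in G2 if and only if for every generator (T_B → T_H) ∈ G1, Exp(G2, T_B, L) ⊨ T_H. (Decidability of containment follows, with complexity that of computing an expansion.) -/
import Mathlib


/-- A theory `O` satisfies a generator `T_B → T_H` w.r.t. a language `L` iff for
every `L`-substitution `σ`, `O ⊨ T_Bσ` implies `O ⊨ T_Hσ`. -/
def SatGen {Theory Sub : Type*} (entails : Theory → Theory → Prop)
    (act : Sub → Theory → Theory) (L : Set Sub)
    (O TB TH : Theory) : Prop :=
  ∀ σ ∈ L, entails O (act σ TB) → entails O (act σ TH)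

/-- freeze theorem: `G1` is `L`-contained in `G2`
(`Exp(G2,O,L) ⊨ Exp(G1,O,L)` for all `O`) if and only if for every generator
`T_B → T_H ∈ G1` we have `Exp(G2, T_B, L) ⊨ T_H`.  Hypotheses: entailment is a
preorder; `Exp G O` entails `O`, satisfies all generators of `G`, and is minimal
with these properties; `Exp` is monotone under entailment and idempotent;
substitution compatibility `Exp(G, T σ) ⊨ (Exp(G, T)) σ`; entailment is preserved
by substitutions; and `L` contains an identity substitution. -/
theorem stmt_8 {Theory Sub ι : Type*}
    (entails : Theory → Theory → Prop)
    (hrefl : ∀ T, entails T T)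
    (htrans : ∀ T1 T2 T3, entails T1 T2 → entails T2 T3 → entails T1 T3)
    (act : Sub → Theory → Theory) (L : Set Sub)
    (Body Head : ι → Theory)
    (Exp : Set ι → Theory → Theory)
    (hExpEnt : ∀ G O, entails (Exp G O) O)
    (hExpSat : ∀ G O, ∀ g ∈ G, SatGen entails act L (Exp G O) (Body g) (Head g))
    (hExpMin : ∀ G O T, entails T O →
      (∀ g ∈ G, SatGen entails act L T (Body g) (Head g)) → entails T (Exp G O))
    (hExpMono : ∀ G O O', entails O O' → entails (Exp G O) (Exp G O'))
    (hExpIdem : ∀ G O, entails (Exp G (Exp G O)) (Exp G O) ∧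
      entails (Exp G O) (Exp G (Exp G O)))
    (hSubst : ∀ G T σ, σ ∈ L → entails (Exp G (act σ T)) (act σ (Exp G T)))
    (hActEnt : ∀ T T' σ, σ ∈ L → entails T T' → entails (act σ T) (act σ T'))
    (hid : ∃ σ ∈ L, ∀ T, act σ T = T)
    (G1 G2 : Set ι) :
    (∀ O : Theory, entails (Exp G2 O) (Exp G1 O)) ↔
      (∀ g ∈ G1, entails (Exp G2 (Body g)) (Head g)) := by
  obtain ⟨σ0, hσ0L, hσ0⟩ := hid
  constructor
  · intro hcont g hg
    have h1 : entails (Exp G1 (Body g)) (Head g) := by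
      have := hExpSat G1 (Body g) g hg σ0 hσ0L
      rw [hσ0, hσ0] at this
      exact this (hExpEnt G1 (Body g))
    exact htrans _ _ _ (hcont (Body g)) h1
  · intro h O
    apply hExpMin
    · exact hExpEnt G2 O
    · intro g hg σ hσ hB
      have h1 : entails (act σ (Exp G2 (Body g))) (act σ (Head g)) :=
        hActEnt _ _ _ hσ (h g hg)
      have h2 : entails (Exp G2 (act σ (Body g))) (act σ (Exp G2 (Body g))) :=
        hSubst G2 (Body g) σ hσ
      have h3 : entails (Exp G2 (Exp G2 O)) (Exp G2 (act σ (Body g))) :=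
        hExpMono G2 _ _ hB
      have h4 : entails (Exp G2 O) (Exp G2 (Exp G2 O)) := (hExpIdem G2 O).2
      exact htrans _ _ _ h4 (htrans _ _ _ h3 (htrans _ _ _ h2 h1))
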